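/- arXiv:2207.12484 — 7 statements merged into one kernel-verified Lean document; each statement's English description precedes it below -/
import Mathlib

section
/- (Proposition 2.) Let Σ be a p×p symmetric positive definite real matrix (indexed by pairs), let A1 (p1×p1) and A2 (p2×p2) be invertible real matrices, and set A = A2 ⊛ A1. If K = Σ2 ⊛ Σ1 (with Σ1, Σ2 symmetric positive definite) minimizes d(K' : Σ) over all separable positive definite p×p matrices K', then A K Aᵀ = (A2 Σ2 A2ᵀ) ⊛ (A1 Σ1 A1ᵀ) minimizes d(K' : A Σ Aᵀ) over all separable positive definite p×p matrices K'. -/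
open Matrix BigOperators Filter

/-- The separable (Kronecker) product `M2 ⊛ M1`: entry at `((i,j),(i',j'))` is
`M1 i i' * M2 j j'`. -/
noncomputable def sep {p1 p2 : ℕ} (M1 : Matrix (Fin p1) (Fin p1) ℝ)
    (M2 : Matrix (Fin p2) (Fin p2) ℝ) :
    Matrix (Fin p1 × Fin p2) (Fin p1 × Fin p2) ℝ :=
  fun x y => M1 x.1 y.1 * M2 x.2 y.2

/-- A `p × p` matrix is separable positive definite if it is the separable product of
two symmetric positive definite matrices. -/
def SepPD {p1 p2 : ℕ} (K : Matrix (Fin p1 × Fin p2) (Fin p1 × Fin p2) ℝ) : Prop :=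
  ∃ (S1 : Matrix (Fin p1) (Fin p1) ℝ) (S2 : Matrix (Fin p2) (Fin p2) ℝ),
    S1.PosDef ∧ S2.PosDef ∧ K = sep S1 S2

/-- The divergence `d(K : S) = log det K + trace (K⁻¹ S)`. -/
noncomputable def dvg {ι : Type*} [Fintype ι] [DecidableEq ι] (K S : Matrix ι ι ℝ) : ℝ :=
  Real.log K.det + (K⁻¹ * S).trace

/-- `P1 S B` has entries `∑_{j,j'} B j j' * S (i,j) (i',j')`. -/
noncomputable def P1 {p1 p2 : ℕ} (S : Matrix (Fin p1 × Fin p2) (Fin p1 × Fin p2) ℝ)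
    (B : Matrix (Fin p2) (Fin p2) ℝ) : Matrix (Fin p1) (Fin p1) ℝ :=
  fun i i' => ∑ j, ∑ j', B j j' * S (i, j) (i', j')

/-- `P2 S A` has entries `∑_{i,i'} A i i' * S (i,j) (i',j')`. -/
noncomputable def P2 {p1 p2 : ℕ} (S : Matrix (Fin p1 × Fin p2) (Fin p1 × Fin p2) ℝ)
    (A : Matrix (Fin p1) (Fin p1) ℝ) : Matrix (Fin p2) (Fin p2) ℝ :=
  fun j j' => ∑ i, ∑ i', A i i' * S (i, j) (i', j')

/-! The divergence is equivariant under congruence: `d(A K Aᵀ : A Σ Aᵀ) = log (det A)² + d(K : Σ)`,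
and for `A = A2 ⊛ A1` the congruence `K ↦ A K Aᵀ` permutes the separable positive definite
matrices. So the transported problem is the original one shifted by a constant, and the
minimizer is transported along with it. -/

section Congruence

variable {n : Type*} [Fintype n] [DecidableEq n]

lemma Matrix.PosDef.mul_mul_transpose_of_isUnit_det {A B : Matrix n n ℝ} (hA : A.PosDef)
    (hB : IsUnit B.det) : (B * A * Bᵀ).PosDef := by
  simpa using hA.mul_mul_conjTranspose_same
    (vecMul_injective_iff_isUnit.2 ((isUnit_iff_isUnit_det B).2 hB))

lemma mul_nonsing_inv_conj_mul_transpose {R : Type*} [CommRing R] {B : Matrix n n R}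
    (hB : IsUnit B.det) (T : Matrix n n R) : B * (B⁻¹ * T * B⁻¹ᵀ) * Bᵀ = T := by
  rw [transpose_nonsing_inv, ← mul_assoc, mul_nonsing_inv_cancel_left _ _ hB, mul_assoc,
    nonsing_inv_mul _ (by simpa using hB), mul_one]

lemma dvg_mul_mul_transpose {A K : Matrix n n ℝ} (hA : IsUnit A.det) (hK : K.det ≠ 0)
    (S : Matrix n n ℝ) :
    dvg (A * K * Aᵀ) (A * S * Aᵀ) = Real.log (A.det ^ 2) + dvg K S := by
  have hdet : (A * K * Aᵀ).det = A.det ^ 2 * K.det := by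
    rw [det_mul, det_mul, det_transpose]; ring
  have htrace : ((A * K * Aᵀ)⁻¹ * (A * S * Aᵀ)).trace = (K⁻¹ * S).trace := by
    have hAT : IsUnit Aᵀ := (isUnit_iff_isUnit_det _).2 (by simpa using hA)
    calc ((A * K * Aᵀ)⁻¹ * (A * S * Aᵀ)).trace
        = (Aᵀ⁻¹ * (K⁻¹ * S) * Aᵀ).trace := by
          rw [Matrix.mul_inv_rev, Matrix.mul_inv_rev]
          simp only [mul_assoc, nonsing_inv_mul_cancel_left _ _ hA]
      _ = (K⁻¹ * S).trace := trace_conj' hAT _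
  rw [dvg, dvg, hdet, htrace, Real.log_mul (pow_ne_zero _ hA.ne_zero) hK]
  ring

end Congruence

section Separable

open Kronecker

variable {p1 p2 : ℕ}

lemma sep_eq_kronecker (M1 : Matrix (Fin p1) (Fin p1) ℝ) (M2 : Matrix (Fin p2) (Fin p2) ℝ) :
    sep M1 M2 = M1 ⊗ₖ M2 :=
  rfl

lemma sep_mul (A1 B1 : Matrix (Fin p1) (Fin p1) ℝ) (A2 B2 : Matrix (Fin p2) (Fin p2) ℝ) :
    sep A1 A2 * sep B1 B2 = sep (A1 * B1) (A2 * B2) := by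
  simp only [sep_eq_kronecker, mul_kronecker_mul]

lemma sep_transpose (M1 : Matrix (Fin p1) (Fin p1) ℝ) (M2 : Matrix (Fin p2) (Fin p2) ℝ) :
    (sep M1 M2)ᵀ = sep M1ᵀ M2ᵀ :=
  rfl

lemma det_sep (M1 : Matrix (Fin p1) (Fin p1) ℝ) (M2 : Matrix (Fin p2) (Fin p2) ℝ) :
    (sep M1 M2).det = M1.det ^ p2 * M2.det ^ p1 := by
  simp [sep_eq_kronecker, det_kronecker]

lemma isUnit_det_sep {A1 : Matrix (Fin p1) (Fin p1) ℝ} {A2 : Matrix (Fin p2) (Fin p2) ℝ}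
    (hA1 : IsUnit A1.det) (hA2 : IsUnit A2.det) : IsUnit (sep A1 A2).det := by
  rw [det_sep]
  exact (hA1.pow _).mul (hA2.pow _)

lemma sep_mul_mul_transpose (A1 : Matrix (Fin p1) (Fin p1) ℝ) (A2 : Matrix (Fin p2) (Fin p2) ℝ)
    (S1 : Matrix (Fin p1) (Fin p1) ℝ) (S2 : Matrix (Fin p2) (Fin p2) ℝ) :
    sep A1 A2 * sep S1 S2 * (sep A1 A2)ᵀ = sep (A1 * S1 * A1ᵀ) (A2 * S2 * A2ᵀ) := by
  rw [sep_transpose, sep_mul, sep_mul]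

lemma SepPD.det_pos {K : Matrix (Fin p1 × Fin p2) (Fin p1 × Fin p2) ℝ} (hK : SepPD K) :
    0 < K.det := by
  obtain ⟨S1, S2, hS1, hS2, rfl⟩ := hK
  rw [det_sep]
  exact mul_pos (pow_pos hS1.det_pos _) (pow_pos hS2.det_pos _)

lemma SepPD.exists_eq_sep_mul_mul_transpose {K : Matrix (Fin p1 × Fin p2) (Fin p1 × Fin p2) ℝ}
    (hK : SepPD K) {A1 : Matrix (Fin p1) (Fin p1) ℝ} {A2 : Matrix (Fin p2) (Fin p2) ℝ}
    (hA1 : IsUnit A1.det) (hA2 : IsUnit A2.det) :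
    ∃ U, SepPD U ∧ K = sep A1 A2 * U * (sep A1 A2)ᵀ := by
  obtain ⟨T1, T2, hT1, hT2, rfl⟩ := hK
  refine ⟨sep (A1⁻¹ * T1 * A1⁻¹ᵀ) (A2⁻¹ * T2 * A2⁻¹ᵀ),
    ⟨_, _, hT1.mul_mul_transpose_of_isUnit_det (isUnit_nonsing_inv_det _ hA1),
      hT2.mul_mul_transpose_of_isUnit_det (isUnit_nonsing_inv_det _ hA2), rfl⟩, ?_⟩
  rw [sep_mul_mul_transpose, mul_nonsing_inv_conj_mul_transpose hA1,
    mul_nonsing_inv_conj_mul_transpose hA2]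

end Separable

theorem stmt4_general (p1 p2 : ℕ)
    (S : Matrix (Fin p1 × Fin p2) (Fin p1 × Fin p2) ℝ)
    (A1 : Matrix (Fin p1) (Fin p1) ℝ) (A2 : Matrix (Fin p2) (Fin p2) ℝ)
    (hA1 : IsUnit A1.det) (hA2 : IsUnit A2.det)
    (S1 : Matrix (Fin p1) (Fin p1) ℝ) (S2 : Matrix (Fin p2) (Fin p2) ℝ)
    (hS1 : S1.PosDef) (hS2 : S2.PosDef)
    (hmin : ∀ K', SepPD K' → dvg (sep S1 S2) S ≤ dvg K' S) :
    sep A1 A2 * sep S1 S2 * (sep A1 A2)ᵀ = sep (A1 * S1 * A1ᵀ) (A2 * S2 * A2ᵀ) ∧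
      ∀ K', SepPD K' →
        dvg (sep (A1 * S1 * A1ᵀ) (A2 * S2 * A2ᵀ)) (sep A1 A2 * S * (sep A1 A2)ᵀ) ≤
          dvg K' (sep A1 A2 * S * (sep A1 A2)ᵀ) := by
  have hA : IsUnit (sep A1 A2).det := isUnit_det_sep hA1 hA2
  have hK : SepPD (sep S1 S2) := ⟨S1, S2, hS1, hS2, rfl⟩
  refine ⟨sep_mul_mul_transpose A1 A2 S1 S2, fun K' hK' => ?_⟩
  obtain ⟨U, hU, rfl⟩ := hK'.exists_eq_sep_mul_mul_transpose hA1 hA2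
  rw [← sep_mul_mul_transpose, dvg_mul_mul_transpose hA hK.det_pos.ne',
    dvg_mul_mul_transpose hA hU.det_pos.ne']
  exact add_le_add_right (hmin U hU) _

theorem stmt4 (p1 p2 : ℕ) (hp1 : 0 < p1) (hp2 : 0 < p2)
    (S : Matrix (Fin p1 × Fin p2) (Fin p1 × Fin p2) ℝ) (hS : S.PosDef)
    (A1 : Matrix (Fin p1) (Fin p1) ℝ) (A2 : Matrix (Fin p2) (Fin p2) ℝ)
    (hA1 : IsUnit A1.det) (hA2 : IsUnit A2.det)
    (S1 : Matrix (Fin p1) (Fin p1) ℝ) (S2 : Matrix (Fin p2) (Fin p2) ℝ)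
    (hS1 : S1.PosDef) (hS2 : S2.PosDef)
    (hmin : ∀ K', SepPD K' → dvg (sep S1 S2) S ≤ dvg K' S) :
    sep A1 A2 * sep S1 S2 * (sep A1 A2)ᵀ = sep (A1 * S1 * A1ᵀ) (A2 * S2 * A2ᵀ) ∧
      ∀ K', SepPD K' →
        dvg (sep (A1 * S1 * A1ᵀ) (A2 * S2 * A2ᵀ)) (sep A1 A2 * S * (sep A1 A2)ᵀ) ≤
          dvg K' (sep A1 A2 * S * (sep A1 A2)ᵀ) :=
  stmt4_general p1 p2 S A1 A2 hA1 hA2 S1 S2 hS1 hS2 hmin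
end

section
/- (Corollary 3, item 4.) Let Σ be a diagonal, symmetric positive definite p×p real matrix (indexed by pairs). If Σ1 (p1×p1) and Σ2 (p2×p2) are symmetric positive definite matrices satisfying the fixed-point equations p2·Σ1 = P1(Σ, Σ2⁻¹) and p1·Σ2 = P2(Σ, Σ1⁻¹), then Σ1 and Σ2 are diagonal matrices, and hence Σ2 ⊛ Σ1 is diagonal. -/
open Matrix BigOperators Filter

theorem stmt8 (p1 p2 : ℕ) (hp1 : 0 < p1) (hp2 : 0 < p2)
    (S : Matrix (Fin p1 × Fin p2) (Fin p1 × Fin p2) ℝ) (hS : S.PosDef) (hSdiag : S.IsDiag)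
    (S1 : Matrix (Fin p1) (Fin p1) ℝ) (S2 : Matrix (Fin p2) (Fin p2) ℝ)
    (hS1 : S1.PosDef) (hS2 : S2.PosDef)
    (heq1 : (p2 : ℝ) • S1 = P1 S S2⁻¹) (heq2 : (p1 : ℝ) • S2 = P2 S S1⁻¹) :
    S1.IsDiag ∧ S2.IsDiag ∧ (sep S1 S2).IsDiag := by
  have hp2' : (p2 : ℝ) ≠ 0 := Nat.cast_ne_zero.mpr hp2.ne'
  have hp1' : (p1 : ℝ) ≠ 0 := Nat.cast_ne_zero.mpr hp1.ne'
  have h1 : S1.IsDiag := by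
    intro i i' h
    have := congrFun (congrFun heq1 i) i'
    simp only [Matrix.smul_apply, smul_eq_mul, P1] at this
    have hz : ∀ j j' : Fin p2, S2⁻¹ j j' * S (i, j) (i', j') = 0 := by
      intro j j'
      rw [hSdiag (by simp [h] : (i, j) ≠ (i', j')), mul_zero]
    rw [Finset.sum_congr rfl (fun j _ => Finset.sum_congr rfl (fun j' _ => hz j j')),
      Finset.sum_const, Finset.sum_const] at this
    simp at this
    exact this.resolve_left hp2.ne'
  have h2 : S2.IsDiag := by
    intro j j' h
    have := congrFun (congrFun heq2 j) j'
    simp only [Matrix.smul_apply, smul_eq_mul, P2] at this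
    have hz : ∀ i i' : Fin p1, S1⁻¹ i i' * S (i, j) (i', j') = 0 := by
      intro i i'
      rw [hSdiag (by simp [h] : (i, j) ≠ (i', j')), mul_zero]
    rw [Finset.sum_congr rfl (fun i _ => Finset.sum_congr rfl (fun i' _ => hz i i')),
      Finset.sum_const, Finset.sum_const] at this
    simp at this
    exact this.resolve_left hp1.ne'
  refine ⟨h1, h2, ?_⟩
  rintro ⟨i, j⟩ ⟨i', j'⟩ h
  simp only [sep]
  by_cases hi : i = i'
  · have hj : j ≠ j' := fun hj => h (by simp [hi, hj])
    rw [h2 hj, mul_zero]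
  · rw [h1 hi, zero_mul]
end

section
/- (Proposition 4.) Let C be a p×p symmetric positive definite real matrix (indexed by pairs). Then the identity matrix I_p minimizes d(K : C) over all separable positive definite p×p matrices K if and only if P1(C, I_{p2}) = p2·I_{p1} and P2(C, I_{p1}) = p1·I_{p2}. -/
open Matrix BigOperators Filter

/-!
For `K = S1 ⊛ S2` one has
`d(K : C) = p2 log det S1 + p1 log det S2 + tr ((S1⁻¹ ⊗ S2⁻¹) C)`, and
`tr ((A ⊗ B) C) = tr (A P1(C, Bᵀ)) = tr (B P2(C, Aᵀ))`.

If `I` is optimal, comparing it with `K = (P1(C, I) / p2) ⊛ I` gives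
`tr M ≤ p1 + log det M` for `M = P1(C, I) / p2`; as `λ - 1 - log λ ≥ 0` with equality only at
`λ = 1`, this forces `M = I`. The same argument applies to `P2`.

Conversely, write `T1 = S1⁻¹ = U diag(α) Uᴴ` and `T2 = S2⁻¹ = V diag(β) Vᴴ`. The diagonal
entries `w` of `(U ⊗ V)ᴴ C (U ⊗ V)` are nonnegative, so summing
`α a β b ≥ 1 + log α a + log β b` against `w` gives
`tr ((T1 ⊗ T2) C) ≥ tr C + tr (log T1 · P1(C, I)) + tr (log T2 · P2(C, I))`,
which under the marginal conditions is `p1 p2 + p2 log det T1 + p1 log det T2`.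
-/

open Kronecker

section General

variable {m n : Type*} [Fintype m] [Fintype n]

theorem conj_kronecker_conj (U A : Matrix m m ℝ) (V B : Matrix n n ℝ) :
    (U * A * star U) ⊗ₖ (V * B * star V) = (U ⊗ₖ V) * (A ⊗ₖ B) * star (U ⊗ₖ V) := by
  rw [mul_kronecker_mul, mul_kronecker_mul, star_eq_conjTranspose, star_eq_conjTranspose,
    star_eq_conjTranspose, conjTranspose_kronecker]

variable [DecidableEq m] [DecidableEq n]

theorem Matrix.PosDef.eq_one_of_trace_le_card_add_log_det {M : Matrix n n ℝ} (hM : M.PosDef)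
    (h : M.trace ≤ Fintype.card n + Real.log M.det) : M = 1 := by
  set μ := hM.1.eigenvalues
  have hμ : ∀ i, 0 < μ i := hM.eigenvalues_pos
  have htrace : M.trace = ∑ i, μ i := by simpa using hM.1.trace_eq_sum_eigenvalues
  have hlog : Real.log M.det = ∑ i, Real.log (μ i) := by
    rw [hM.1.det_eq_prod_eigenvalues]
    simpa using Real.log_prod fun i _ => (hμ i).ne'
  have hgap : ∀ i, 0 ≤ μ i - 1 - Real.log (μ i) := fun i => by
    linarith [Real.log_le_sub_one_of_pos (hμ i)]
  have hsum : ∑ i, (μ i - 1 - Real.log (μ i)) = 0 := by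
    refine le_antisymm ?_ (Finset.sum_nonneg fun i _ => hgap i)
    simp only [Finset.sum_sub_distrib, Finset.sum_const, Finset.card_univ, nsmul_one]
    linarith
  have hμ_one : μ = 1 := funext fun i => by
    by_contra hne
    have := (Finset.sum_eq_zero_iff_of_nonneg fun i _ => hgap i).1 hsum i (Finset.mem_univ i)
    linarith [Real.log_lt_sub_one_of_pos (hμ i) hne]
  rw [hM.1.spectral_theorem, show hM.1.eigenvalues = 1 from hμ_one]
  simp

theorem Matrix.PosDef.exists_conj_diagonal {T : Matrix n n ℝ} (hT : T.PosDef) :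
    ∃ U ∈ unitaryGroup n ℝ, ∃ α : n → ℝ, (∀ i, 0 < α i) ∧ T = U * diagonal α * star U := by
  refine ⟨_, hT.1.eigenvectorUnitary.2, _, hT.eigenvalues_pos, ?_⟩
  simpa using hT.1.spectral_theorem

theorem log_det_conj_diagonal {U : Matrix n n ℝ} (hU : U ∈ unitaryGroup n ℝ) {α : n → ℝ}
    (hα : ∀ i, 0 < α i) :
    Real.log (U * diagonal α * star U).det = (U * diagonal (Real.log ∘ α) * star U).trace := by
  rw [det_conj_of_mul_eq_one (Unitary.mul_star_self_of_mem hU) (Unitary.star_mul_self_of_mem hU),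
    trace_mul_cycle, Unitary.star_mul_self_of_mem hU, Matrix.one_mul, det_diagonal,
    trace_diagonal, Real.log_prod fun i _ => (hα i).ne']
  rfl

theorem trace_conj_diagonal_mul (W C : Matrix n n ℝ) (f : n → ℝ) :
    (W * diagonal f * star W * C).trace = ∑ i, f i * (star W * C * W) i i := by
  rw [Matrix.mul_assoc, trace_mul_cycle]
  simp [trace, mul_diagonal, mul_comm]

end General

section Marginals

variable {p1 p2 : ℕ}

theorem trace_kronecker_mul_eq_trace_mul_P1 (A : Matrix (Fin p1) (Fin p1) ℝ)
    (B : Matrix (Fin p2) (Fin p2) ℝ) (C : Matrix (Fin p1 × Fin p2) (Fin p1 × Fin p2) ℝ) :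
    ((A ⊗ₖ B) * C).trace = (A * P1 C Bᵀ).trace := by
  simp only [trace, diag, mul_apply, P1, kronecker_apply, transpose_apply, Fintype.sum_prod_type,
    Finset.mul_sum, mul_assoc]
  refine Finset.sum_congr rfl fun i _ => ?_
  rw [Finset.sum_comm]
  exact Finset.sum_congr rfl fun i' _ => Finset.sum_comm

theorem trace_kronecker_mul_eq_trace_mul_P2 (A : Matrix (Fin p1) (Fin p1) ℝ)
    (B : Matrix (Fin p2) (Fin p2) ℝ) (C : Matrix (Fin p1 × Fin p2) (Fin p1 × Fin p2) ℝ) :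
    ((A ⊗ₖ B) * C).trace = (B * P2 C Aᵀ).trace := by
  simp only [trace, diag, mul_apply, P2, kronecker_apply, transpose_apply, Fintype.sum_prod_type,
    Finset.mul_sum]
  rw [Finset.sum_comm]
  refine Finset.sum_congr rfl fun j _ => ?_
  rw [Finset.sum_congr rfl fun _ _ => Finset.sum_comm, Finset.sum_comm]
  refine Finset.sum_congr rfl fun _ _ => ?_
  rw [Finset.sum_comm]
  exact Finset.sum_congr rfl fun _ _ => Finset.sum_congr rfl fun _ _ => by ring

theorem trace_P1_one (C : Matrix (Fin p1 × Fin p2) (Fin p1 × Fin p2) ℝ) :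
    (P1 C 1).trace = C.trace := by
  simpa using (trace_kronecker_mul_eq_trace_mul_P1 1 1 C).symm

theorem trace_P2_one (C : Matrix (Fin p1 × Fin p2) (Fin p1 × Fin p2) ℝ) :
    (P2 C 1).trace = C.trace := by
  simpa using (trace_kronecker_mul_eq_trace_mul_P2 1 1 C).symm

theorem P1_one_eq_sum_submatrix (C : Matrix (Fin p1 × Fin p2) (Fin p1 × Fin p2) ℝ) :
    P1 C 1 = ∑ j, C.submatrix (·, j) (·, j) := by
  ext i i'
  simp [P1, one_apply, Matrix.sum_apply]

theorem P2_one_eq_sum_submatrix (C : Matrix (Fin p1 × Fin p2) (Fin p1 × Fin p2) ℝ) :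
    P2 C 1 = ∑ i, C.submatrix (i, ·) (i, ·) := by
  ext j j'
  simp [P2, one_apply, Matrix.sum_apply]

theorem posDef_P1_one (hp2 : 0 < p2) {C : Matrix (Fin p1 × Fin p2) (Fin p1 × Fin p2) ℝ}
    (hC : C.PosDef) : (P1 C 1).PosDef := by
  rw [P1_one_eq_sum_submatrix]
  exact posDef_sum ⟨⟨0, hp2⟩, Finset.mem_univ _⟩ fun j _ =>
    hC.submatrix (Prod.mk_left_injective j)

theorem posDef_P2_one (hp1 : 0 < p1) {C : Matrix (Fin p1 × Fin p2) (Fin p1 × Fin p2) ℝ}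
    (hC : C.PosDef) : (P2 C 1).PosDef := by
  rw [P2_one_eq_sum_submatrix]
  exact posDef_sum ⟨⟨0, hp1⟩, Finset.mem_univ _⟩ fun i _ =>
    hC.submatrix (Prod.mk_right_injective i)

end Marginals

section Divergence

variable {p1 p2 : ℕ}

theorem dvg_one {ι : Type*} [Fintype ι] [DecidableEq ι] (C : Matrix ι ι ℝ) :
    dvg 1 C = C.trace := by
  simp [dvg]

theorem dvg_sep {S1 : Matrix (Fin p1) (Fin p1) ℝ} {S2 : Matrix (Fin p2) (Fin p2) ℝ}
    (hS1 : S1.PosDef) (hS2 : S2.PosDef) (C : Matrix (Fin p1 × Fin p2) (Fin p1 × Fin p2) ℝ) :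
    dvg (sep S1 S2) C =
      p2 * Real.log S1.det + p1 * Real.log S2.det + ((S1⁻¹ ⊗ₖ S2⁻¹) * C).trace := by
  rw [dvg, show sep S1 S2 = S1 ⊗ₖ S2 from rfl, det_kronecker, inv_kronecker,
    Real.log_mul (pow_ne_zero _ hS1.det_pos.ne') (pow_ne_zero _ hS2.det_pos.ne'),
    Real.log_pow, Real.log_pow, Fintype.card_fin, Fintype.card_fin]

theorem P1_one_eq_smul_one_of_forall_dvg_le (hp2 : 0 < p2)
    {C : Matrix (Fin p1 × Fin p2) (Fin p1 × Fin p2) ℝ} (hC : C.PosDef)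
    (H : ∀ K, SepPD K → dvg 1 C ≤ dvg K C) : P1 C 1 = (p2 : ℝ) • 1 := by
  have hp : (0 : ℝ) < p2 := by exact_mod_cast hp2
  set S := (p2 : ℝ)⁻¹ • P1 C 1
  have hS : S.PosDef := (posDef_P1_one hp2 hC).smul (inv_pos.2 hp)
  have hP : P1 C 1 = (p2 : ℝ) • S := by simp [S, smul_smul, hp.ne']
  clear_value S
  have h := H _ ⟨S, 1, hS, .one, rfl⟩
  rw [dvg_one, dvg_sep hS .one, inv_one, trace_kronecker_mul_eq_trace_mul_P1, transpose_one,
    ← trace_P1_one, hP, Matrix.mul_smul, nonsing_inv_mul _ hS.det_pos.ne'.isUnit] at h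
  simp only [trace_smul, trace_one, det_one, Real.log_one, Fintype.card_fin, smul_eq_mul] at h
  suffices S = 1 by rw [hP, this]
  refine hS.eq_one_of_trace_le_card_add_log_det (le_of_mul_le_mul_left ?_ hp)
  rw [Fintype.card_fin]
  linarith

theorem P2_one_eq_smul_one_of_forall_dvg_le (hp1 : 0 < p1)
    {C : Matrix (Fin p1 × Fin p2) (Fin p1 × Fin p2) ℝ} (hC : C.PosDef)
    (H : ∀ K, SepPD K → dvg 1 C ≤ dvg K C) : P2 C 1 = (p1 : ℝ) • 1 := by
  have hp : (0 : ℝ) < p1 := by exact_mod_cast hp1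
  set S := (p1 : ℝ)⁻¹ • P2 C 1
  have hS : S.PosDef := (posDef_P2_one hp1 hC).smul (inv_pos.2 hp)
  have hP : P2 C 1 = (p1 : ℝ) • S := by simp [S, smul_smul, hp.ne']
  clear_value S
  have h := H _ ⟨1, S, .one, hS, rfl⟩
  rw [dvg_one, dvg_sep .one hS, inv_one, trace_kronecker_mul_eq_trace_mul_P2, transpose_one,
    ← trace_P2_one, hP, Matrix.mul_smul, nonsing_inv_mul _ hS.det_pos.ne'.isUnit] at h
  simp only [trace_smul, trace_one, det_one, Real.log_one, Fintype.card_fin, smul_eq_mul] at h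
  suffices S = 1 by rw [hP, this]
  refine hS.eq_one_of_trace_le_card_add_log_det (le_of_mul_le_mul_left ?_ hp)
  rw [Fintype.card_fin]
  linarith

theorem le_trace_kronecker_mul {C : Matrix (Fin p1 × Fin p2) (Fin p1 × Fin p2) ℝ}
    (hC : C.PosSemidef) (hP1 : P1 C 1 = (p2 : ℝ) • 1) (hP2 : P2 C 1 = (p1 : ℝ) • 1)
    {T1 : Matrix (Fin p1) (Fin p1) ℝ} {T2 : Matrix (Fin p2) (Fin p2) ℝ}
    (hT1 : T1.PosDef) (hT2 : T2.PosDef) :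
    p1 * p2 + p2 * Real.log T1.det + p1 * Real.log T2.det ≤ ((T1 ⊗ₖ T2) * C).trace := by
  obtain ⟨U, hU, α, hα, rfl⟩ := hT1.exists_conj_diagonal
  obtain ⟨V, hV, β, hβ, rfl⟩ := hT2.exists_conj_diagonal
  have hU1 : U * diagonal 1 * star U = 1 := by simp [Unitary.mul_star_self_of_mem hU]
  have hV1 : V * diagonal 1 * star V = 1 := by simp [Unitary.mul_star_self_of_mem hV]
  set w := fun x => (star (U ⊗ₖ V) * C * (U ⊗ₖ V)) x x
  have hw : ∀ x, 0 ≤ w x := fun x => (hC.conjTranspose_mul_mul_same (U ⊗ₖ V)).diag_nonneg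
  have hweight : ∀ f g, ((U * diagonal f * star U) ⊗ₖ (V * diagonal g * star V) * C).trace
      = ∑ x, f x.1 * g x.2 * w x := fun f g => by
    rw [conj_kronecker_conj, diagonal_kronecker_diagonal, trace_conj_diagonal_mul]
  calc (p1 * p2 + p2 * Real.log (U * diagonal α * star U).det
        + p1 * Real.log (V * diagonal β * star V).det : ℝ)
      = ((1 ⊗ₖ 1) * C).trace + ((U * diagonal (Real.log ∘ α) * star U) ⊗ₖ 1 * C).trace
          + (1 ⊗ₖ (V * diagonal (Real.log ∘ β) * star V) * C).trace := by
        rw [one_kronecker_one, Matrix.one_mul, log_det_conj_diagonal hU hα,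
          log_det_conj_diagonal hV hβ, trace_kronecker_mul_eq_trace_mul_P1,
          trace_kronecker_mul_eq_trace_mul_P2, transpose_one, transpose_one, hP1, hP2,
          ← trace_P1_one, hP1]
        simp only [Matrix.mul_smul, Matrix.mul_one, trace_smul, trace_one, Fintype.card_fin,
          smul_eq_mul]
        ring
    _ = ∑ x, (1 + Real.log (α x.1) + Real.log (β x.2)) * w x := by
        rw [← hU1, ← hV1, hweight, hweight, hweight, ← Finset.sum_add_distrib,
          ← Finset.sum_add_distrib]
        simp only [Pi.one_apply, Function.comp_apply]
        exact Finset.sum_congr rfl fun x _ => by ring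
    _ ≤ ∑ x, α x.1 * β x.2 * w x := by
        refine Finset.sum_le_sum fun x _ => mul_le_mul_of_nonneg_right ?_ (hw x)
        have := Real.log_le_sub_one_of_pos (mul_pos (hα x.1) (hβ x.2))
        rw [Real.log_mul (hα x.1).ne' (hβ x.2).ne'] at this
        linarith
    _ = _ := (hweight α β).symm

theorem dvg_one_le_dvg_sep {C : Matrix (Fin p1 × Fin p2) (Fin p1 × Fin p2) ℝ}
    (hC : C.PosSemidef) (hP1 : P1 C 1 = (p2 : ℝ) • 1) (hP2 : P2 C 1 = (p1 : ℝ) • 1)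
    {S1 : Matrix (Fin p1) (Fin p1) ℝ} {S2 : Matrix (Fin p2) (Fin p2) ℝ}
    (hS1 : S1.PosDef) (hS2 : S2.PosDef) : dvg 1 C ≤ dvg (sep S1 S2) C := by
  have key := le_trace_kronecker_mul hC hP1 hP2 hS1.inv hS2.inv
  rw [det_nonsing_inv, det_nonsing_inv, Ring.inverse_eq_inv', Real.log_inv, Real.log_inv] at key
  rw [dvg_one, ← trace_P1_one, hP1, dvg_sep hS1 hS2, trace_smul, trace_one, Fintype.card_fin,
    smul_eq_mul]
  linarith

end Divergence

theorem stmt9 (p1 p2 : ℕ) (hp1 : 0 < p1) (hp2 : 0 < p2)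
    (C : Matrix (Fin p1 × Fin p2) (Fin p1 × Fin p2) ℝ) (hC : C.PosDef) :
    (∀ K, SepPD K → dvg (1 : Matrix (Fin p1 × Fin p2) (Fin p1 × Fin p2) ℝ) C ≤ dvg K C) ↔
      (P1 C (1 : Matrix (Fin p2) (Fin p2) ℝ) = (p2 : ℝ) • (1 : Matrix (Fin p1) (Fin p1) ℝ) ∧
       P2 C (1 : Matrix (Fin p1) (Fin p1) ℝ) = (p1 : ℝ) • (1 : Matrix (Fin p2) (Fin p2) ℝ)) := by
  constructor
  · intro H
    exact ⟨P1_one_eq_smul_one_of_forall_dvg_le hp2 hC H,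
      P2_one_eq_smul_one_of_forall_dvg_le hp1 hC H⟩
  · rintro ⟨hP1, hP2⟩ K ⟨S1, S2, hS1, hS2, rfl⟩
    exact dvg_one_le_dvg_sep hC.posSemidef hP1 hP2 hS1 hS2
end

section
/- Let B1 be an invertible p1×p1 real matrix and B2 an invertible p2×p2 real matrix. If the separable matrix B = B2 ⊛ B1 is orthogonal, i.e. (B2 ⊛ B1)(B2 ⊛ B1)ᵀ = I_p, then there exist an orthogonal p1×p1 matrix R1 and an orthogonal p2×p2 matrix R2 such that B2 ⊛ B1 = R2 ⊛ R1. -/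
open Matrix BigOperators Filter

lemma sep_mul_transpose {p1 p2 : ℕ} (B1 : Matrix (Fin p1) (Fin p1) ℝ)
    (B2 : Matrix (Fin p2) (Fin p2) ℝ) (i i' : Fin p1) (j j' : Fin p2) :
    (sep B1 B2 * (sep B1 B2)ᵀ) (i, j) (i', j')
      = (B1 * B1ᵀ) i i' * (B2 * B2ᵀ) j j' := by
  simp only [Matrix.mul_apply, Matrix.transpose_apply, sep, Fintype.sum_prod_type,
    Finset.mul_sum, Finset.sum_mul]
  rw [Finset.sum_comm]
  apply Finset.sum_congr rfl; intro k _
  apply Finset.sum_congr rfl; intro l _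
  ring

theorem stmt12 (p1 p2 : ℕ) (hp1 : 0 < p1) (hp2 : 0 < p2)
    (B1 : Matrix (Fin p1) (Fin p1) ℝ) (B2 : Matrix (Fin p2) (Fin p2) ℝ)
    (hB1 : IsUnit B1.det) (hB2 : IsUnit B2.det)
    (horth : sep B1 B2 * (sep B1 B2)ᵀ = 1) :
    ∃ (R1 : Matrix (Fin p1) (Fin p1) ℝ) (R2 : Matrix (Fin p2) (Fin p2) ℝ),
      R1 * R1ᵀ = 1 ∧ R2 * R2ᵀ = 1 ∧ sep B1 B2 = sep R1 R2 := by
  have key : ∀ (i i' : Fin p1) (j j' : Fin p2),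
      (B1 * B1ᵀ) i i' * (B2 * B2ᵀ) j j'
        = if i = i' ∧ j = j' then (1:ℝ) else 0 := by
    intro i i' j j'
    have := congrFun (congrFun horth (i, j)) (i', j')
    rw [sep_mul_transpose] at this
    rw [this, Matrix.one_apply]
    simp [Prod.ext_iff]
  set i0 : Fin p1 := ⟨0, hp1⟩
  set j0 : Fin p2 := ⟨0, hp2⟩
  set a : ℝ := (B1 * B1ᵀ) i0 i0 with ha
  set b : ℝ := (B2 * B2ᵀ) j0 j0 with hb
  have hab : a * b = 1 := by simpa using key i0 i0 j0 j0
  have ha0 : a ≠ 0 := fun h => by simp [h] at hab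
  have hb0 : b ≠ 0 := fun h => by simp [h] at hab
  have hanneg : 0 ≤ a := by
    rw [ha, Matrix.mul_apply]
    exact Finset.sum_nonneg fun k _ => by
      simpa [Matrix.transpose_apply] using mul_self_nonneg (B1 i0 k)
  have hapos : 0 < a := lt_of_le_of_ne hanneg (Ne.symm ha0)
  -- B1 * B1ᵀ = a • 1, B2 * B2ᵀ = a⁻¹ • 1
  have hB1eq : B1 * B1ᵀ = a • (1 : Matrix (Fin p1) (Fin p1) ℝ) := by
    ext i i'
    have h1 := key i i' j0 j0
    simp only [and_true, eq_self_iff_true] at h1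
    have : (B1 * B1ᵀ) i i' * b = if i = i' then 1 else 0 := by
      simpa using h1
    have hBii : (B1 * B1ᵀ) i i' = b⁻¹ * (if i = i' then 1 else 0) := by
      field_simp at this ⊢; linarith [this]
    rw [hBii]
    have hbinv : b⁻¹ = a := by field_simp; linarith [hab]
    simp [hbinv, Matrix.smul_apply, Matrix.one_apply, mul_comm]
  have hB2eq : B2 * B2ᵀ = a⁻¹ • (1 : Matrix (Fin p2) (Fin p2) ℝ) := by
    ext j j'
    have h1 := key i0 i0 j j'
    simp only [true_and, eq_self_iff_true] at h1
    have : a * (B2 * B2ᵀ) j j' = if j = j' then 1 else 0 := by simpa using h1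
    have : (B2 * B2ᵀ) j j' = a⁻¹ * (if j = j' then 1 else 0) := by
      field_simp at this ⊢; linarith [this]
    rw [this]
    simp [Matrix.smul_apply, Matrix.one_apply]
  set s := Real.sqrt a with hs
  have hs0 : s ≠ 0 := ne_of_gt (Real.sqrt_pos.mpr hapos)
  have hssq : s * s = a := Real.mul_self_sqrt hanneg
  refine ⟨s⁻¹ • B1, s • B2, ?_, ?_, ?_⟩
  · rw [Matrix.transpose_smul, Matrix.smul_mul, Matrix.mul_smul, hB1eq, smul_smul, smul_smul]
    rw [show s⁻¹ * s⁻¹ * a = 1 by field_simp; linarith [hssq]]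
    simp
  · rw [Matrix.transpose_smul, Matrix.smul_mul, Matrix.mul_smul, hB2eq, smul_smul, smul_smul]
    rw [show s * s * a⁻¹ = 1 by field_simp; linarith [hssq]]
    simp
  · ext x y
    simp only [sep, Matrix.smul_apply, smul_eq_mul]
    field_simp
end

section
/- Let p be a positive integer, 0 < a ≤ b real numbers, and S a p×p symmetric real matrix with a·I_p ⪯ S ⪯ b·I_p (i.e., S − a·I_p and b·I_p − S are positive semidefinite). Let K be a p×p symmetric positive definite matrix satisfying log det K + trace(K⁻¹ S) ≤ trace(S). Then every eigenvalue l of K satisfies log l + a/l ≤ p·b − (p−1)·(log a + 1). -/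
open Matrix Finset Unitary

/-!
With `f x = log x + a / x`, the eigenvalues `μᵢ` of `K` satisfy
`∑ f μᵢ = log det K + a tr K⁻¹ ≤ log det K + tr (K⁻¹ S) ≤ tr S ≤ p b`,
where `a tr K⁻¹ ≤ tr (K⁻¹ S)` because the trace of a product of two positive semidefinite
matrices is nonnegative. Since `f ≥ log a + 1` (from `log t ≤ t - 1` at `t = a / x`),
discarding all terms but one gives the bound for a single eigenvalue.
-/

namespace Matrix

variable {𝕜 n : Type*} [RCLike 𝕜] [Fintype n]

open scoped ComplexOrder

lemma PosSemidef.trace_mul_nonneg {M N : Matrix n n 𝕜} (hM : M.PosSemidef) (hN : N.PosSemidef) :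
    0 ≤ (M * N).trace := by
  classical
  obtain ⟨B, rfl⟩ : ∃ B : Matrix n n 𝕜, N = Bᴴ * B := by
    open scoped MatrixOrder in exact CStarAlgebra.nonneg_iff_eq_star_mul_self.mp hN.nonneg
  rw [← Matrix.mul_assoc, trace_mul_comm, ← Matrix.mul_assoc]
  exact (hM.mul_mul_conjTranspose_same B).trace_nonneg

lemma PosSemidef.mul_trace_le_trace_mul {M S : Matrix n n 𝕜} [DecidableEq n] {a : 𝕜}
    (hM : M.PosSemidef) (hS : (S - a • 1).PosSemidef) : a * M.trace ≤ (M * S).trace := by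
  have h := hM.trace_mul_nonneg hS
  rwa [Matrix.mul_sub, Matrix.mul_smul, Matrix.mul_one, trace_sub, trace_smul, smul_eq_mul,
    sub_nonneg] at h

lemma trace_conjStarAlgAut [DecidableEq n] (U : unitary (Matrix n n 𝕜)) (X : Matrix n n 𝕜) :
    (conjStarAlgAut 𝕜 _ U X).trace = X.trace := by
  rw [conjStarAlgAut_apply, trace_mul_cycle, Unitary.coe_star_mul_self, Matrix.one_mul]

lemma IsHermitian.trace_inv_eq_sum_inv_eigenvalues [DecidableEq n] {A : Matrix n n 𝕜}
    (hA : A.IsHermitian) (hdet : A.det ≠ 0) : A⁻¹.trace = ∑ i, (hA.eigenvalues i : 𝕜)⁻¹ := by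
  have hne : ∀ i, (hA.eigenvalues i : 𝕜) ≠ 0 := by
    simpa [hA.det_eq_prod_eigenvalues, Finset.prod_ne_zero_iff] using hdet
  set φ := conjStarAlgAut 𝕜 _ hA.eigenvectorUnitary
  have hinv : A⁻¹ = φ (diagonal fun i ↦ (hA.eigenvalues i : 𝕜)⁻¹) := by
    refine inv_eq_left_inv ?_
    calc _ = φ (diagonal (fun i ↦ (hA.eigenvalues i : 𝕜)⁻¹) *
          diagonal (RCLike.ofReal ∘ hA.eigenvalues)) := by rw [map_mul, ← hA.spectral_theorem]
      _ = 1 := by simp [diagonal_mul_diagonal, inv_mul_cancel₀ (hne _)]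
  rw [hinv, trace_conjStarAlgAut, trace_diagonal]

lemma IsHermitian.log_det_eq_sum_log_eigenvalues [DecidableEq n] {A : Matrix n n ℝ}
    (hA : A.IsHermitian) (hdet : A.det ≠ 0) :
    Real.log A.det = ∑ i, Real.log (hA.eigenvalues i) := by
  rw [hA.det_eq_prod_eigenvalues] at hdet ⊢
  simp only [RCLike.ofReal_real_eq_id, id] at hdet ⊢
  exact Real.log_prod fun i _ ↦ Finset.prod_ne_zero_iff.mp hdet i (mem_univ i)

end Matrix

lemma Real.log_add_one_le_log_add_div {a x : ℝ} (ha : 0 < a) (hx : 0 < x) :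
    Real.log a + 1 ≤ Real.log x + a / x := by
  have h := Real.log_le_sub_one_of_pos (div_pos ha hx)
  rw [Real.log_div ha.ne' hx.ne'] at h
  linarith

lemma Finset.le_sub_card_mul_of_sum_le {ι R : Type*} [DecidableEq ι] [CommRing R]
    [PartialOrder R] [IsOrderedAddMonoid R] {s : Finset ι} {f : ι → R} {m C : R} {i : ι} (hi : i ∈ s)
    (hm : ∀ j ∈ s, m ≤ f j) (hsum : ∑ j ∈ s, f j ≤ C) : f i ≤ C - (#s - 1) * m := by
  have hrest : (#s - 1 : R) * m ≤ ∑ j ∈ s.erase i, f j := by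
    have := card_nsmul_le_sum (s.erase i) f m fun j hj ↦ hm j (mem_of_mem_erase hj)
    rwa [card_erase_of_mem hi, nsmul_eq_mul, Nat.cast_pred (card_pos.mpr ⟨i, hi⟩)] at this
  rw [← add_sum_erase s f hi] at hsum
  rw [le_sub_iff_add_le]
  exact (add_le_add_right hrest (f i)).trans hsum

theorem stmt15_general (p : ℕ) (a b : ℝ) (ha : 0 < a)
    (S : Matrix (Fin p) (Fin p) ℝ)
    (hlow : (S - a • (1 : Matrix (Fin p) (Fin p) ℝ)).PosSemidef)
    (hhigh : (b • (1 : Matrix (Fin p) (Fin p) ℝ) - S).PosSemidef)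
    (K : Matrix (Fin p) (Fin p) ℝ) (hK : K.PosDef)
    (hineq : Real.log K.det + (K⁻¹ * S).trace ≤ S.trace)
    (l : ℝ) (hl : l ∈ spectrum ℝ K) :
    Real.log l + a / l ≤ (p : ℝ) * b - ((p : ℝ) - 1) * (Real.log a + 1) := by
  have hKH := hK.isHermitian
  rw [hKH.spectrum_real_eq_range_eigenvalues] at hl
  obtain ⟨i, rfl⟩ := hl
  have hdet : K.det ≠ 0 := hK.det_pos.ne'
  have htrS : S.trace ≤ p * b := by
    have := hhigh.trace_nonneg
    simp only [trace_sub, trace_smul, trace_one, Fintype.card_fin, smul_eq_mul] at this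
    linarith
  have htrKinvS := hK.inv.posSemidef.mul_trace_le_trace_mul hlow
  have hsum : ∑ j, (Real.log (hKH.eigenvalues j) + a / hKH.eigenvalues j) ≤ p * b := by
    have htrKinv := hKH.trace_inv_eq_sum_inv_eigenvalues hdet
    simp only [RCLike.ofReal_real_eq_id, id] at htrKinv
    simp only [sum_add_distrib, div_eq_mul_inv, ← mul_sum, ← htrKinv,
      ← hKH.log_det_eq_sum_log_eigenvalues hdet]
    linarith
  simpa using Finset.le_sub_card_mul_of_sum_le (mem_univ i)
    (fun j _ ↦ Real.log_add_one_le_log_add_div ha (hK.eigenvalues_pos j)) hsum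

theorem stmt15 (p : ℕ) (hp : 0 < p) (a b : ℝ) (ha : 0 < a) (hab : a ≤ b)
    (S : Matrix (Fin p) (Fin p) ℝ) (hSsymm : S.IsHermitian)
    (hlow : (S - a • (1 : Matrix (Fin p) (Fin p) ℝ)).PosSemidef)
    (hhigh : (b • (1 : Matrix (Fin p) (Fin p) ℝ) - S).PosSemidef)
    (K : Matrix (Fin p) (Fin p) ℝ) (hK : K.PosDef)
    (hineq : Real.log K.det + (K⁻¹ * S).trace ≤ S.trace)
    (l : ℝ) (hl : l ∈ spectrum ℝ K) :
    Real.log l + a / l ≤ (p : ℝ) * b - ((p : ℝ) - 1) * (Real.log a + 1) :=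
  stmt15_general p a b ha S hlow hhigh K hK hineq l hl
end

section
/- Let p be a positive integer and C a p×p symmetric positive definite real matrix with C ≠ I_p. Then the function l(r) = (1+r)·log det((C + r·I_p)/(1+r)) is strictly increasing on (0,∞): for all 0 < s < t, (1+s)·log det((C + s·I_p)/(1+s)) < (1+t)·log det((C + t·I_p)/(1+t)). -/
/-!
Diagonalising `C`, the function is `∑ᵢ (1 + r) log ((λᵢ + r) / (1 + r))` over the eigenvalues
`λᵢ > 0` of `C`. Each summand has derivative `log y + y⁻¹ - 1 ≥ 0` with `y = (λᵢ + r) / (1 + r)`,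
which vanishes only at `y = 1`; so every summand is monotone, and the summand of an eigenvalue
`λᵢ ≠ 1`, which exists because `C ≠ 1`, is strictly increasing.
-/

open Matrix Real Set

section Scalar

variable (a : ℝ)

lemma hasDerivAt_one_add_mul_log_div {x : ℝ} (hax : a + x ≠ 0) (hx : 1 + x ≠ 0) :
    HasDerivAt (fun r => (1 + r) * log ((a + r) / (1 + r)))
      (log ((a + x) / (1 + x)) + (1 + x) / (a + x) - 1) x := by
  have hnum : HasDerivAt (fun r => a + r) 1 x := (hasDerivAt_id x).const_add a
  have hden : HasDerivAt (fun r => 1 + r) 1 x := (hasDerivAt_id x).const_add 1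
  refine (hden.mul ((hnum.div hden hx).log (div_ne_zero hax hx))).congr_deriv ?_
  simp only [Pi.div_apply]
  field_simp
  ring

lemma log_add_inv_sub_one_nonneg {y : ℝ} (hy : 0 < y) : 0 ≤ log y + y⁻¹ - 1 := by
  have := log_le_sub_one_of_pos (inv_pos.mpr hy)
  rw [log_inv] at this
  linarith

lemma log_add_inv_sub_one_pos {y : ℝ} (hy : 0 < y) (hy1 : y ≠ 1) : 0 < log y + y⁻¹ - 1 := by
  have := log_lt_sub_one_of_pos (inv_pos.mpr hy) (inv_ne_one.mpr hy1)
  rw [log_inv] at this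
  linarith

lemma hasDerivWithinAt_one_add_mul_log_div {x : ℝ} (hx : x ∈ Ioi (max (-1) (-a))) :
    HasDerivWithinAt (fun r => (1 + r) * log ((a + r) / (1 + r)))
      (log ((a + x) / (1 + x)) + ((a + x) / (1 + x))⁻¹ - 1) (Ioi (max (-1) (-a))) x := by
  obtain ⟨h1x, hax⟩ := max_lt_iff.mp (mem_Ioi.mp hx)
  rw [inv_div]
  exact (hasDerivAt_one_add_mul_log_div a (by linarith) (by linarith)).hasDerivWithinAt

lemma div_pos_of_mem_Ioi_max {x : ℝ} (hx : x ∈ Ioi (max (-1) (-a))) :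
    0 < (a + x) / (1 + x) := by
  obtain ⟨h1x, hax⟩ := max_lt_iff.mp (mem_Ioi.mp hx)
  exact div_pos (by linarith) (by linarith)

lemma monotoneOn_one_add_mul_log_div :
    MonotoneOn (fun r => (1 + r) * log ((a + r) / (1 + r))) (Ioi (max (-1) (-a))) := by
  refine monotoneOn_of_hasDerivWithinAt_nonneg (convex_Ioi _)
    (fun x hx => (hasDerivWithinAt_one_add_mul_log_div a hx).continuousWithinAt)
    (f' := fun x => log ((a + x) / (1 + x)) + ((a + x) / (1 + x))⁻¹ - 1) ?_ ?_ <;>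
    rw [interior_Ioi]
  · exact fun x hx => hasDerivWithinAt_one_add_mul_log_div a hx
  · exact fun x hx => log_add_inv_sub_one_nonneg (div_pos_of_mem_Ioi_max a hx)

lemma strictMonoOn_one_add_mul_log_div (ha : a ≠ 1) :
    StrictMonoOn (fun r => (1 + r) * log ((a + r) / (1 + r))) (Ioi (max (-1) (-a))) := by
  refine strictMonoOn_of_hasDerivWithinAt_pos (convex_Ioi _)
    (fun x hx => (hasDerivWithinAt_one_add_mul_log_div a hx).continuousWithinAt)
    (f' := fun x => log ((a + x) / (1 + x)) + ((a + x) / (1 + x))⁻¹ - 1) ?_ ?_ <;>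
    rw [interior_Ioi]
  · exact fun x hx => hasDerivWithinAt_one_add_mul_log_div a hx
  · intro x hx
    refine log_add_inv_sub_one_pos (div_pos_of_mem_Ioi_max a hx) fun h => ha ?_
    obtain ⟨h1x, -⟩ := max_lt_iff.mp (mem_Ioi.mp hx)
    rw [div_eq_one_iff_eq (by linarith)] at h
    linarith

end Scalar

namespace Matrix

variable {𝕜 n : Type*} [RCLike 𝕜] [Fintype n] [DecidableEq n]

lemma IsHermitian.det_add_smul_one {A : Matrix n n 𝕜} (hA : A.IsHermitian) (r : ℝ) :
    (A + (r : 𝕜) • (1 : Matrix n n 𝕜)).det = ∏ i, ((hA.eigenvalues i + r : ℝ) : 𝕜) := by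
  have h : A + (r : 𝕜) • (1 : Matrix n n 𝕜) = Unitary.conjStarAlgAut 𝕜 _ hA.eigenvectorUnitary
      (diagonal (RCLike.ofReal ∘ fun i => hA.eigenvalues i + r)) := by
    conv_lhs => rw [hA.spectral_theorem]
    simp only [Function.comp_def, ← diagonal_add, ← smul_one_eq_diagonal, map_add, map_smul,
      map_one]
  rw [h]
  simp only [det_map, det_diagonal, Function.comp_apply]

lemma IsHermitian.exists_eigenvalues_ne_one {A : Matrix n n 𝕜} (hA : A.IsHermitian) (h : A ≠ 1) :
    ∃ i, hA.eigenvalues i ≠ 1 := by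
  by_contra! h1
  apply h
  rw [hA.spectral_theorem]
  simp [Function.comp_def, h1, -Unitary.conjStarAlgAut_apply]

lemma PosDef.one_add_mul_log_det_eq_sum {A : Matrix n n ℝ} (hA : A.PosDef) {r : ℝ} (hr : 0 ≤ r) :
    (1 + r) * log (((1 + r)⁻¹ • (A + r • (1 : Matrix n n ℝ))).det) =
      ∑ i, (1 + r) * log ((hA.1.eigenvalues i + r) / (1 + r)) := by
  have hdet : ((1 + r)⁻¹ • (A + r • (1 : Matrix n n ℝ))).det =
      ∏ i, (hA.1.eigenvalues i + r) / (1 + r) := by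
    have h := hA.1.det_add_smul_one r
    simp only [RCLike.ofReal_real_eq_id, id] at h
    rw [det_smul, h, Finset.prod_div_distrib, Finset.prod_const, Finset.card_univ,
      div_eq_inv_mul, inv_pow]
  rw [hdet, log_prod fun i _ => (div_pos (by linarith [hA.eigenvalues_pos i]) (by linarith)).ne',
    Finset.mul_sum]

end Matrix

theorem stmt17_general (p : ℕ)
    (C : Matrix (Fin p) (Fin p) ℝ) (hC : C.PosDef) (hCne : C ≠ 1) :
    ∀ s t : ℝ, 0 < s → s < t →
      (1 + s) * Real.log (((1 + s)⁻¹ • (C + s • (1 : Matrix (Fin p) (Fin p) ℝ))).det) <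
        (1 + t) * Real.log (((1 + t)⁻¹ • (C + t • (1 : Matrix (Fin p) (Fin p) ℝ))).det) := by
  intro s t hs hst
  have hmem : ∀ i, ∀ r : ℝ, 0 < r → r ∈ Ioi (max (-1) (-hC.1.eigenvalues i)) := fun i r hr =>
    mem_Ioi.mpr (max_lt (by linarith) (by linarith [hC.eigenvalues_pos i]))
  obtain ⟨j, hj⟩ := hC.1.exists_eigenvalues_ne_one hCne
  rw [hC.one_add_mul_log_det_eq_sum hs.le, hC.one_add_mul_log_det_eq_sum (hs.trans hst).le]
  refine Finset.sum_lt_sum (fun i _ => ?_) ⟨j, Finset.mem_univ j, ?_⟩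
  · exact monotoneOn_one_add_mul_log_div _ (hmem i s hs) (hmem i t (hs.trans hst)) hst.le
  · exact strictMonoOn_one_add_mul_log_div _ hj (hmem j s hs) (hmem j t (hs.trans hst)) hst

theorem stmt17 (p : ℕ) (hp : 0 < p)
    (C : Matrix (Fin p) (Fin p) ℝ) (hC : C.PosDef) (hCne : C ≠ 1) :
    ∀ s t : ℝ, 0 < s → s < t →
      (1 + s) * Real.log (((1 + s)⁻¹ • (C + s • (1 : Matrix (Fin p) (Fin p) ℝ))).det) <
        (1 + t) * Real.log (((1 + t)⁻¹ • (C + t • (1 : Matrix (Fin p) (Fin p) ℝ))).det) :=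
  stmt17_general p C hC hCne
end

section
/- Fix a positive integer p and a real ε > 0. For each integer n > p + 1 and each real r ≥ ε, set δ = −(p+1)/n and define g_n(r) = p·(log(n/2) − 1) − (2/n)·Σ_{j=1}^{p} [log Γ((n(1+r)+1−j)/2) − log Γ((nr+1−j)/2)] + p·(1+r)·log(1+r+δ) − p·r·log(r+δ), where Γ is the real Gamma function. Then sup_{r ∈ [ε,∞)} |g_n(r)| → 0 as n → ∞; that is, g_n converges to 0 uniformly on [ε,∞). -/
open Filter

/-- The function `g_n(r)` from the statement, with `δ = -(p+1)/n`. -/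
noncomputable def gfun (p : ℕ) (n : ℕ) (r : ℝ) : ℝ :=
  (p : ℝ) * (Real.log ((n : ℝ) / 2) - 1) -
    (2 / (n : ℝ)) * ∑ j ∈ Finset.Icc 1 p,
      (Real.log (Real.Gamma (((n : ℝ) * (1 + r) + 1 - (j : ℝ)) / 2)) -
        Real.log (Real.Gamma (((n : ℝ) * r + 1 - (j : ℝ)) / 2))) +
    (p : ℝ) * (1 + r) * Real.log (1 + r + (-((p : ℝ) + 1) / (n : ℝ))) -
    (p : ℝ) * r * Real.log (r + (-((p : ℝ) + 1) / (n : ℝ)))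

/-!
Write `log Γ(x) = (x - 1/2) log x - x + R(x)`. Comparing `Γ` at integers with Stirling's sequence,
and interpolating between consecutive integers by log-convexity of `Γ`, shows that `R` is bounded
on `[2, ∞)`. With `u = r + (1 - j)/n`, the `j`-th Gamma quotient in `g_n(r)` is thus explicit up to
`O(1/n)`, and the summand reduces to `(1 + r)(log(1 + r + δ) - log(1 + u)) - r(log(r + δ) - log u)`
plus `(j/n) log(1 + 1/u)`. As `δ` and `u - r` are `O(1/n)` while `r ≥ ε`, each of these is `O(1/n)`
uniformly in `r`.
-/

open Real Topology

noncomputable def stirlingRemainder (x : ℝ) : ℝ :=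
  log (Gamma x) - ((x - 1 / 2) * log x - x)

lemma log_Gamma_add_one {y : ℝ} (hy : 0 < y) : log (Gamma (y + 1)) = log (Gamma y) + log y := by
  rw [Gamma_add_one hy.ne', log_mul hy.ne' (Gamma_pos_of_pos hy).ne', add_comm]

lemma stirlingRemainder_natCast_eq {m : ℕ} (hm : m ≠ 0) :
    stirlingRemainder m = log (Stirling.stirlingSeq m) + log 2 / 2 := by
  have hm' : (0 : ℝ) < m := by positivity
  have hΓ : log (Gamma m) = log m.factorial - log m := by
    rw [eq_sub_iff_add_eq, ← log_Gamma_add_one hm', Gamma_nat_eq_factorial]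
  rw [stirlingRemainder, Stirling.log_stirlingSeq_formula, hΓ, log_mul two_ne_zero hm'.ne',
    log_div hm'.ne' (exp_pos 1).ne', log_exp]
  ring

lemma stirlingRemainder_natCast_mem_Icc {m : ℕ} (hm : m ≠ 0) :
    stirlingRemainder m ∈ Set.Icc 0 1 := by
  obtain ⟨k, rfl⟩ := Nat.exists_eq_succ_of_ne_zero hm
  have hpos : 0 < Stirling.stirlingSeq (k + 1) := Stirling.stirlingSeq'_pos k
  have hlower : log √π ≤ log (Stirling.stirlingSeq (k + 1)) :=
    log_le_log (by positivity) (Stirling.sqrt_pi_le_stirlingSeq hm)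
  have hupper : log (Stirling.stirlingSeq (k + 1)) ≤ log (Stirling.stirlingSeq 1) :=
    log_le_log hpos (Stirling.stirlingSeq'_antitone (Nat.zero_le k))
  rw [Stirling.stirlingSeq_one, log_div (exp_pos 1).ne' (by positivity), log_exp,
    log_sqrt zero_le_two] at hupper
  have hπ : 0 ≤ log √π := log_nonneg (one_le_sqrt.2 (by linarith [pi_gt_three]))
  have h2 : 0 ≤ log 2 := log_nonneg one_le_two
  rw [stirlingRemainder_natCast_eq hm]
  constructor <;> linarith

lemma stirlingRemainder_natCast_add_mem_Icc {m : ℕ} (hm : 2 ≤ m) {t : ℝ} (ht₀ : 0 < t)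
    (ht₁ : t ≤ 1) :
    stirlingRemainder (m + t) ∈
      Set.Icc (stirlingRemainder m - 5 / 4) (stirlingRemainder m + 1) := by
  have hm' : (2 : ℝ) ≤ m := by exact_mod_cast hm
  have hconv := convexOn_log_Gamma
  have hup : log (Gamma (m + t)) ≤ log (Gamma m) + t * log m :=
    BohrMollerup.f_add_nat_le hconv log_Gamma_add_one (by omega) ht₀ ht₁
  have hlow : log (Gamma m) + t * log (m - 1) ≤ log (Gamma (m + t)) :=
    BohrMollerup.f_add_nat_ge hconv log_Gamma_add_one hm ht₀
  have hlog_add : log (m + t) - log m ≤ t / m := by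
    rw [← log_div (by positivity) (by positivity)]
    linarith [log_le_sub_one_of_pos (show 0 < (m + t) / m by positivity),
      show (m + t) / m - 1 = t / m by field_simp; ring]
  have hlog_sub : -1 ≤ log (m - 1) - log m := by
    rw [← log_div (by linarith) (by positivity)]
    have := one_sub_inv_le_log_of_pos (show 0 < (m - 1 : ℝ) / m by
      apply div_pos <;> linarith)
    have h : ((m - 1 : ℝ) / m)⁻¹ ≤ 2 := by
      rw [inv_div, div_le_iff₀ (by linarith)]; linarith
    linarith
  have hlog_mono : log m ≤ log (m + t) := log_le_log (by positivity) (by linarith)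
  have hfrac : (m + t - 1 / 2) * (t / m) ≤ 5 / 4 := by
    rw [mul_div_assoc', div_le_iff₀ (by positivity)]; nlinarith
  simp only [stirlingRemainder, Set.mem_Icc]
  constructor <;> nlinarith

lemma abs_stirlingRemainder_le {x : ℝ} (hx : 2 ≤ x) : |stirlingRemainder x| ≤ 2 := by
  set m := ⌊x⌋₊
  have hm : 2 ≤ m := Nat.le_floor (by exact_mod_cast hx)
  have hm_mem := stirlingRemainder_natCast_mem_Icc (by omega : m ≠ 0)
  rw [Set.mem_Icc] at hm_mem
  rcases (Nat.floor_le (by linarith : 0 ≤ x)).eq_or_lt with hxm | hxm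
  · rw [← hxm, abs_le]; constructor <;> linarith
  · have hx_mem := stirlingRemainder_natCast_add_mem_Icc hm (sub_pos.2 hxm)
      (by linarith [Nat.lt_floor_add_one x])
    rw [add_sub_cancel, Set.mem_Icc] at hx_mem
    rw [abs_le]; constructor <;> linarith

lemma abs_log_sub_log_le {x y : ℝ} (hx : 0 < x) (hy : 0 < y) :
    |log x - log y| ≤ |x - y| / min x y := by
  have key : ∀ {a b : ℝ}, 0 < a → 0 < b → log a - log b ≤ |a - b| / min a b := by
    intro a b ha hb
    rw [← log_div ha.ne' hb.ne']
    calc log (a / b) ≤ a / b - 1 := log_le_sub_one_of_pos (by positivity)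
      _ = (a - b) / b := by field_simp
      _ ≤ |a - b| / min a b :=
        div_le_div₀ (abs_nonneg _) (le_abs_self _) (lt_min ha hb) (min_le_right a b)
  rw [abs_sub_le_iff]
  exact ⟨key hx hy, by rw [abs_sub_comm, min_comm]; exact key hy hx⟩

lemma mul_abs_log_add_sub_log_add_le {w d d' : ℝ} (hw : 0 < w) (hd : |d| ≤ w / 2)
    (hd' : |d'| ≤ w / 2) : w * |log (w + d) - log (w + d')| ≤ 2 * |d - d'| := by
  have hmin : w / 2 ≤ min (w + d) (w + d') :=
    le_min (by linarith [neg_abs_le d]) (by linarith [neg_abs_le d'])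
  calc w * |log (w + d) - log (w + d')|
      ≤ w * (|d - d'| / (w / 2)) := by
        gcongr
        refine (abs_log_sub_log_le (by linarith [min_le_left (w + d) (w + d')])
          (by linarith [min_le_right (w + d) (w + d')])).trans ?_
        rw [add_sub_add_left_eq_sub]
        gcongr
    _ = 2 * |d - d'| := by field_simp

lemma log_add_one_sub_log_le {u : ℝ} (hu : 0 < u) : log (u + 1) - log u ≤ u⁻¹ := by
  rw [← log_div (by positivity) hu.ne']
  calc log ((u + 1) / u) ≤ (u + 1) / u - 1 := log_le_sub_one_of_pos (by positivity)
    _ = u⁻¹ := by field_simp; ring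

lemma two_div_mul_log_Gamma_eq {n w : ℝ} (hn : 0 < n) (hw : 0 < w) :
    2 / n * log (Gamma (n * w / 2)) =
      (w - 1 / n) * (log (n / 2) + log w) - w + 2 / n * stirlingRemainder (n * w / 2) := by
  have hlog : log (n * w / 2) = log (n / 2) + log w := by
    rw [mul_div_right_comm, log_mul (by positivity) hw.ne']
  rw [stirlingRemainder, hlog]
  field_simp
  ring

lemma abs_logGamma_term_le {n r δ ρ : ℝ} (hn : 0 < n) (hr : 0 < r) (hδ : |δ| ≤ r / 2)
    (hρ : |ρ| ≤ r / 2) (hnr : 8 ≤ n * r) :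
    |log (n / 2) - 1 + (1 + r) * log (1 + r + δ) - r * log (r + δ) -
        2 / n * (log (Gamma (n * (1 + r + ρ) / 2)) - log (Gamma (n * (r + ρ) / 2)))| ≤
      4 * |δ - ρ| + 2 * |ρ - 1 / n| / r + 8 / n := by
  set u := r + ρ
  have hu : r / 2 ≤ u := by linarith [neg_abs_le ρ]
  have hu₀ : 0 < u := by linarith
  have hu₁ : 1 + r + ρ = u + 1 := by ring
  have hdecomp :
      log (n / 2) - 1 + (1 + r) * log (1 + r + δ) - r * log (r + δ) -
          2 / n * (log (Gamma (n * (1 + r + ρ) / 2)) - log (Gamma (n * (r + ρ) / 2))) =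
        (1 + r) * (log (1 + r + δ) - log (1 + r + ρ)) - r * (log (r + δ) - log (r + ρ)) -
          (ρ - 1 / n) * (log (u + 1) - log u) -
          2 / n * (stirlingRemainder (n * (u + 1) / 2) - stirlingRemainder (n * u / 2)) := by
    rw [mul_sub, two_div_mul_log_Gamma_eq hn (by linarith), two_div_mul_log_Gamma_eq hn hu₀, hu₁]
    ring
  have hδr₁ : |δ| ≤ (1 + r) / 2 := by linarith
  have hρr₁ : |ρ| ≤ (1 + r) / 2 := by linarith
  have h₁ := mul_abs_log_add_sub_log_add_le (by linarith) hδr₁ hρr₁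
  have h₂ := mul_abs_log_add_sub_log_add_le hr hδ hρ
  have hlogu : |log (u + 1) - log u| ≤ 2 / r := by
    rw [abs_of_nonneg (sub_nonneg.2 (log_le_log hu₀ (by linarith)))]
    refine (log_add_one_sub_log_le hu₀).trans ?_
    rw [inv_le_comm₀ hu₀ (by positivity), inv_div]
    exact hu
  have hE : ∀ w, r / 2 ≤ w → |stirlingRemainder (n * w / 2)| ≤ 2 := fun w hw =>
    abs_stirlingRemainder_le (by nlinarith)
  have hE₁ := hE (u + 1) (by linarith)
  have hE₂ := hE u hu
  rw [hdecomp]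
  calc _ ≤ |(1 + r) * (log (1 + r + δ) - log (1 + r + ρ))| + |r * (log (r + δ) - log (r + ρ))| +
        |(ρ - 1 / n) * (log (u + 1) - log u)| +
        |2 / n * (stirlingRemainder (n * (u + 1) / 2) - stirlingRemainder (n * u / 2))| := by
        refine (abs_sub _ _).trans (add_le_add_left ((abs_sub _ _).trans
          (add_le_add_left (abs_sub _ _) _)) _)
    _ ≤ 2 * |δ - ρ| + 2 * |δ - ρ| + |ρ - 1 / n| * (2 / r) + 2 / n * (2 + 2) := by
        rw [abs_mul, abs_mul, abs_mul, abs_mul, abs_of_pos hr, abs_of_pos (by linarith : 0 < 1 + r),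
          abs_of_pos (by positivity : 0 < 2 / n)]
        gcongr
        exact (abs_sub _ _).trans (add_le_add hE₁ hE₂)
    _ = 4 * |δ - ρ| + 2 * |ρ - 1 / n| / r + 8 / n := by ring

lemma gfun_eq_sum (p : ℕ) {n : ℕ} (hn : n ≠ 0) (r : ℝ) :
    gfun p n r = ∑ j ∈ Finset.Icc 1 p,
      (log (n / 2) - 1 + (1 + r) * log (1 + r + -(p + 1) / n) - r * log (r + -(p + 1) / n) -
        2 / n * (log (Gamma (n * (1 + r + (1 - j) / n) / 2)) -
          log (Gamma (n * (r + (1 - j) / n) / 2)))) := by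
  have harg : ∀ w j : ℝ, (n : ℝ) * (w + (1 - j) / n) / 2 = (n * w + 1 - j) / 2 := by
    intro w j; field_simp; ring
  simp only [harg, gfun, Finset.sum_sub_distrib, Finset.sum_add_distrib, Finset.sum_const,
    Nat.card_Icc, Nat.add_sub_cancel, ← Finset.mul_sum, nsmul_eq_mul]
  ring

lemma abs_gfun_le {p n : ℕ} {ε r : ℝ} (hε : 0 < ε) (hn : 2 * (p + 4) ≤ n * ε) (hr : ε ≤ r) :
    |gfun p n r| ≤ p * (4 * (p + 1) + 2 * p / ε + 8) / n := by
  have hn₀ : (0 : ℝ) < n := pos_of_mul_pos_left ((by positivity : (0 : ℝ) < 2 * (p + 4)).trans_le hn) hε.le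
  have hr₀ : 0 < r := hε.trans_le hr
  have hnr : n * ε ≤ n * r := by gcongr
  rw [gfun_eq_sum p (by exact_mod_cast hn₀.ne') r]
  calc _ ≤ ∑ j ∈ Finset.Icc 1 p, (4 * (p + 1) + 2 * p / ε + 8) / (n : ℝ) := by
        refine (Finset.abs_sum_le_sum_abs _ _).trans (Finset.sum_le_sum fun j hj => ?_)
        obtain ⟨hj₁, hjp⟩ := Finset.mem_Icc.1 hj
        have hj₁ : (1 : ℝ) ≤ j := by exact_mod_cast hj₁
        have hjp : (j : ℝ) ≤ p := by exact_mod_cast hjp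
        have hshift : ∀ c : ℝ, 0 ≤ c → c ≤ p + 1 → |c / n| ≤ r / 2 := fun c hc₀ hc => by
          rw [abs_div, abs_of_nonneg hc₀, abs_of_pos hn₀, div_le_iff₀ hn₀]
          nlinarith
        have hδ : |(-(p + 1) / n : ℝ)| ≤ r / 2 := by
          rw [neg_div, abs_neg]; exact hshift _ (by positivity) le_rfl
        have hρ : |(1 - j) / (n : ℝ)| ≤ r / 2 := by
          rw [← abs_neg, ← neg_div, neg_sub]; exact hshift _ (by linarith) (by linarith)
        have hδρ : |(-(p + 1) / n - (1 - j) / n : ℝ)| ≤ (p + 1) / n := by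
          rw [← sub_div, abs_div, abs_of_pos hn₀]
          gcongr
          rw [abs_le]
          constructor <;> linarith
        have hρn : |(1 - j) / n - 1 / (n : ℝ)| = j / n := by
          rw [← sub_div, sub_sub_cancel_left, neg_div, abs_neg, abs_of_nonneg (by positivity)]
        refine (abs_logGamma_term_le hn₀ hr₀ hδ hρ (by linarith)).trans ?_
        rw [hρn]
        calc 4 * |(-(p + 1) / n - (1 - j) / n : ℝ)| + 2 * (j / n) / r + 8 / n
            ≤ 4 * ((p + 1) / n) + 2 * (p / n) / ε + 8 / n := by gcongr
          _ = (4 * (p + 1) + 2 * p / ε + 8) / n := by field_simp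
    _ = _ := by
        rw [Finset.sum_const, Nat.card_Icc, Nat.add_sub_cancel, nsmul_eq_mul]
        ring

lemma tendstoUniformlyOn_zero_of_norm_le {ι α E : Type*} [SeminormedAddGroup E] {l : Filter ι}
    {s : Set α} {f : ι → α → E} {b : ι → ℝ} (hb : Tendsto b l (𝓝 0))
    (hf : ∀ᶠ i in l, ∀ x ∈ s, ‖f i x‖ ≤ b i) : TendstoUniformlyOn f 0 l s :=
  SeminormedAddGroup.tendstoUniformlyOn_zero.2 fun _ hη =>
    (hf.and (hb.eventually (gt_mem_nhds hη))).mono fun _ h x hx => (h.1 x hx).trans_lt h.2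

theorem stmt19_general (p : ℕ) (ε : ℝ) (hε : 0 < ε) :
    TendstoUniformlyOn (fun n r => gfun p n r) 0 atTop (Set.Ici ε) := by
  refine tendstoUniformlyOn_zero_of_norm_le
    (tendsto_const_div_atTop_nhds_zero_nat (p * (4 * (p + 1) + 2 * p / ε + 8))) ?_
  filter_upwards [eventually_ge_atTop ⌈2 * (p + 4) / ε⌉₊] with n hn r hr
  refine abs_gfun_le hε ?_ hr
  rw [← div_le_iff₀ hε]
  exact Nat.ceil_le.1 hn

theorem stmt19 (p : ℕ) (hp : 0 < p) (ε : ℝ) (hε : 0 < ε) :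
    TendstoUniformlyOn (fun n r => gfun p n r) 0 atTop (Set.Ici ε) :=
  stmt19_general p ε hε
end
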